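/- Let p be an odd prime, d ≥ 2 with d ∣ p−1, and fix 0 ≤ j ≤ d−1. Define a sequence (c_k) of complex numbers by c_0 = 1 and c_k = −(1/k)·Σ_{l=0}^{k−1} c_l · n(k−1−l, j) for k ≥ 1. Then for every k ≥ 0, k!·c_k is a rational integer; in particular every c_k is rational. -/

import Mathlib

/-!
Write `ψ x = ζ ^ x` for the additive character of `𝔽_p`, `g = ω` and `h` for the elements
`g ^ (d u)`, `u < f`, which form the subgroup of `d`-th powers. Expanding `η_i ^ k * η_{i+ν}` and
shifting each of the `k` summation indices by the last one gives a sum of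
`ψ (g ^ i * h * (h₁ + ⋯ + h_k + g ^ ν))` over `h, h₁, …, h_k`; the factor `g ^ i * h` then runs
over all of `𝔽_p^*` as `i` and `h` vary, and `∑ x ∈ 𝔽_p^*, ψ (x * b)` is `p - 1` or `-1`. So every
`n(k,ν)` is an integer, and the recurrence,
`k! c_k = -∑ l < k, ((k-1)! / l!) * (l! c_l) * n(k-1-l, j)`, makes `k! c_k` one by induction.
-/

open Finset

/-- The Gauss period `η_i = Σ_{u=0}^{f-1} ζ^{ω^{du+i}}`. -/
noncomputable def gaussPeriod (p d f : ℕ) (ω : (ZMod p)ˣ) (ζ : ℂ) (i : ℕ) : ℂ :=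
  ∑ u ∈ Finset.range f, ζ ^ (((ω : ZMod p) ^ (d * u + i)).val)

/-- The cyclotomic number `(i,j)` of order `d`. -/
noncomputable def cycNum (p d f : ℕ) (ω : (ZMod p)ˣ) (i j : ℕ) : ℕ :=
  Nat.card {uv : ℕ × ℕ // uv.1 < f ∧ uv.2 < f ∧
    (1 : ZMod p) + (ω : ZMod p) ^ (d * uv.1 + i) = (ω : ZMod p) ^ (d * uv.2 + j)}

/-- The cyclotomic integer `n(k,ν) = Σ_{i=0}^{d-1} η_i^k · η_{i+ν}`. -/
noncomputable def nInt (p d f : ℕ) (ω : (ZMod p)ˣ) (ζ : ℂ) (k ν : ℕ) : ℂ :=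
  ∑ i ∈ Finset.range d, (gaussPeriod p d f ω ζ i) ^ k * gaussPeriod p d f ω ζ (i + ν)

/-- `θ = 0` if `f` is even, `θ = d/2` if `f` is odd. -/
def theta (d f : ℕ) : ℕ := if Even f then 0 else d / 2

/-- `N(k,a)`: the number of `k`-tuples of nonzero `d`-th powers summing to `a`. -/
noncomputable def waringCount (p d k : ℕ) (a : ZMod p) : ℕ :=
  Nat.card {t : Fin k → ZMod p //
    (∀ i, ∃ b : (ZMod p)ˣ, ((b : ZMod p)) ^ d = t i) ∧ ∑ i, t i = a}

/-- `s_d(p,a)`: the least `k ≥ 1` such that `a` is a sum of `k` nonzero `d`-th powers. -/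
noncomputable def sWaring (p d : ℕ) (a : ZMod p) : ℕ :=
  sInf {k | 1 ≤ k ∧ ∃ u : Fin k → (ZMod p)ˣ, a = ∑ i, ((u i : ZMod p)) ^ d}

/-- `g_d(p) = max_{a ∈ 𝔽_p^*} s_d(p,a)`. -/
noncomputable def gWaring (p d : ℕ) : ℕ :=
  sSup {s | ∃ a : (ZMod p)ˣ, s = sWaring p d (a : ZMod p)}

/-- Product of a chain of cyclotomic numbers `(a,x₁)(x₁,x₂)⋯(xₘ,b)`. -/
noncomputable def chainProd (c : ℕ → ℕ → ℕ) (a b : ℕ) : List ℕ → ℕ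
  | [] => c a b
  | x :: xs => c a x * chainProd c x b xs

/-- Sum over all chains of `m` intermediate indices `0 ≤ i < d` of the products
`(a,i₂)(i₂,i₃)⋯(i_{m+1},b)` of consecutive cyclotomic numbers. -/
noncomputable def chainSum (d : ℕ) (c : ℕ → ℕ → ℕ) (a b m : ℕ) : ℕ :=
  ∑ v : Fin m → Fin d, chainProd c a b (List.ofFn fun i => ((v i : ℕ)))

theorem AddChar.map_sum_eq_prod {ι A M : Type*} [AddCommMonoid A] [CommMonoid M]
    (ψ : AddChar A M) (s : Finset ι) (f : ι → A) : ψ (∑ i ∈ s, f i) = ∏ i ∈ s, ψ (f i) := by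
  induction s using Finset.cons_induction with
  | empty => simp
  | cons a s ha ih => rw [sum_cons, prod_cons, map_add_eq_mul, ih]

theorem Fintype.sum_units_eq_sum_sub_zero {F M : Type*} [Field F] [Fintype F] [DecidableEq F]
    [AddCommGroup M] (φ : F → M) : ∑ x : Fˣ, φ x = ∑ x, φ x - φ 0 := by
  rw [eq_sub_iff_add_eq, ← sum_erase_add univ φ (mem_univ 0), add_left_inj,
    sum_subtype (univ.erase 0) (p := (· ≠ 0)) (by simp) φ]
  exact Fintype.sum_equiv unitsEquivNeZero _ _ fun _ => rfl

theorem AddChar.sum_units_mulShift {F R : Type*} [Field F] [Fintype F] [DecidableEq F]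
    [CommRing R] [IsDomain R] {ψ : AddChar F R} (hψ : ψ.IsPrimitive) (b : F) :
    ∑ x : Fˣ, ψ (x * b) = if b = 0 then (Fintype.card F : R) - 1 else -1 := by
  rw [Fintype.sum_units_eq_sum_sub_zero (fun x => ψ (x * b)), sum_mulShift b hψ, zero_mul,
    map_zero_eq_one]
  split_ifs <;> simp

theorem sum_range_mul_eq_sum_sum {M : Type*} [AddCommMonoid M] (φ : ℕ → M) (d f : ℕ) :
    ∑ w ∈ range (d * f), φ w = ∑ i ∈ range d, ∑ v ∈ range f, φ (d * v + i) := by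
  induction f with
  | zero => simp
  | succ f ih => rw [Nat.mul_succ, sum_range_add, ih, ← sum_add_distrib]; simp [sum_range_succ]

theorem AddChar.sum_pow_mul_sum_eq_sum_sum {A F R : Type*} [AddCommGroup A] [Fintype A]
    [CommRing F] [CommRing R] (ψ : AddChar F R) {h : A → F} (hh : ∀ u v, h (u + v) = h u * h v)
    (a c : F) (k : ℕ) :
    (∑ u, ψ (a * h u)) ^ k * ∑ u, ψ (a * h u * c)
      = ∑ t : Fin k → A, ∑ v, ψ (a * h v * (∑ m, h (t m) + c)) := by
  conv_rhs => rw [sum_comm]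
  rw [Fintype.sum_pow, sum_mul]
  simp_rw [mul_sum]
  rw [sum_comm]
  refine sum_congr rfl fun v _ => ?_
  refine Fintype.sum_equiv
    (Equiv.piCongrRight fun _ => Equiv.subRight v : (Fin k → A) ≃ (Fin k → A)) _ _ fun t => ?_
  simp only [Equiv.piCongrRight_apply, Pi.map_apply, Equiv.subRight_apply, mul_add, mul_sum,
    AddChar.map_add_eq_mul, AddChar.map_sum_eq_prod]
  congr 1
  refine prod_congr rfl fun m _ => ?_
  rw [mul_assoc, ← hh, add_sub_cancel]

theorem IsCyclic.sum_range_card_pow {G M : Type*} [Group G] [Fintype G] [AddCommMonoid M] {a : G}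
    (ha : ∀ x, x ∈ Subgroup.zpowers a) (φ : G → M) :
    ∑ i ∈ range (Fintype.card G), φ (a ^ i) = ∑ x, φ x := by
  classical
  rw [← Nat.card_eq_fintype_card, ← orderOf_eq_card_of_forall_mem_zpowers ha,
    ← IsCyclic.image_range_orderOf ha, sum_image fun i hi j hj =>
      pow_injOn_Iio_orderOf (by simpa using hi) (by simpa using hj)]

theorem IsCyclic.sum_range_sum_pow_mul_pow_pow {G M : Type*} [Group G] [Fintype G]
    [AddCommMonoid M] {a : G} (ha : ∀ x, x ∈ Subgroup.zpowers a) {d f : ℕ}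
    (hdf : d * f = Fintype.card G) (φ : G → M) :
    ∑ i ∈ range d, ∑ v ∈ range f, φ (a ^ i * (a ^ d) ^ v) = ∑ x, φ x := by
  rw [← IsCyclic.sum_range_card_pow ha, ← hdf, sum_range_mul_eq_sum_sum]
  simp only [← pow_mul, ← pow_add, add_comm]

theorem factorial_mul_mem_bot_of_recurrence {K : Type*} [Field K] [CharZero K] {a c : ℕ → K}
    (ha : ∀ m, a m ∈ (⊥ : Subring K)) (hc0 : c 0 = 1)
    (hc : ∀ k, 1 ≤ k → c k = -(1 / (k : K)) * ∑ l ∈ range k, c l * a (k - 1 - l)) (k : ℕ) :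
    (k.factorial : K) * c k ∈ (⊥ : Subring K) := by
  induction k using Nat.strong_induction_on with
  | _ k ih =>
    rcases k with _ | n
    · simp [hc0]
    have hrec : ((n + 1).factorial : K) * c (n + 1)
        = -∑ l ∈ range (n + 1), (n.factorial : K) * c l * a (n - l) := by
      rw [hc _ le_add_self, Nat.factorial_succ, mul_sum, Nat.add_sub_cancel, ← sum_neg_distrib,
        mul_sum]
      refine sum_congr rfl fun l _ => ?_
      push_cast
      field_simp
    rw [hrec]
    refine neg_mem (sum_mem fun l hl => ?_)
    obtain ⟨q, hq⟩ := Nat.factorial_dvd_factorial (Nat.lt_succ_iff.mp (mem_range.mp hl))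
    have hsplit : (n.factorial : K) * c l * a (n - l)
        = q * ((l.factorial : K) * c l) * a (n - l) := by
      rw [hq]; push_cast; ring
    rw [hsplit]
    exact mul_mem (mul_mem (natCast_mem _ q) (ih l (mem_range.mp hl))) (ha _)

theorem nInt_mem_bot {p d f : ℕ} (hp : p.Prime) (hdvd : d ∣ p - 1) (hf : f = (p - 1) / d)
    {ω : (ZMod p)ˣ} (hω : ∀ x : (ZMod p)ˣ, ∃ n : ℕ, ω ^ n = x) {ζ : ℂ}
    (hζ : IsPrimitiveRoot ζ p) (k ν : ℕ) :
    nInt p d f ω ζ k ν ∈ (⊥ : Subring ℂ) := by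
  have : Fact p.Prime := ⟨hp⟩
  have hdf : d * f = p - 1 := by rw [hf, Nat.mul_div_cancel' hdvd]
  have : NeZero f := ⟨by rintro rfl; simp at hdf; have := hp.two_le; omega⟩
  set ψ : AddChar (ZMod p) ℂ := AddChar.zmodChar p hζ.pow_eq_one
  set g : ZMod p := (ω : ZMod p)
  have hgd : (g ^ d) ^ f = 1 := by
    rw [← pow_mul, hdf, ← Units.val_pow_eq_pow_val, ZMod.units_pow_card_sub_one_eq_one,
      Units.val_one]
  set h : Fin f → ZMod p := fun u => (g ^ d) ^ (u : ℕ)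
  have hh : ∀ u v, h (u + v) = h u * h v := fun u v => by
    simp only [h, Fin.val_add, ← pow_eq_pow_mod _ hgd, pow_add]
  set B : (Fin k → Fin f) → ZMod p := fun t => ∑ m, h (t m) + g ^ ν
  have hgauss : ∀ i, gaussPeriod p d f ω ζ i = ∑ u, ψ (g ^ i * h u) := fun i => by
    rw [gaussPeriod, ← Fin.sum_univ_eq_sum_range]
    simp only [h, ← pow_mul, pow_add, mul_comm]
    rfl
  have hgen : ∀ x, x ∈ Subgroup.zpowers ω := fun x => by
    obtain ⟨n, rfl⟩ := hω x
    exact Subgroup.npow_mem_zpowers ω n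
  have hexpand : nInt p d f ω ζ k ν = ∑ t, ∑ x : (ZMod p)ˣ, ψ (x * B t) := by
    calc nInt p d f ω ζ k ν
        = ∑ i ∈ range d, (∑ u, ψ (g ^ i * h u)) ^ k * ∑ u, ψ (g ^ i * h u * g ^ ν) := by
          simp only [nInt, hgauss, pow_add, mul_right_comm _ (g ^ ν)]
      _ = ∑ i ∈ range d, ∑ t, ∑ v, ψ (g ^ i * h v * B t) :=
          sum_congr rfl fun i _ => ψ.sum_pow_mul_sum_eq_sum_sum hh _ _ k
      _ = ∑ t, ∑ x : (ZMod p)ˣ, ψ (x * B t) := by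
          rw [sum_comm]
          refine sum_congr rfl fun t _ => ?_
          rw [← IsCyclic.sum_range_sum_pow_mul_pow_pow hgen (hdf.trans (ZMod.card_units p).symm)]
          refine sum_congr rfl fun i _ => ?_
          rw [← Fin.sum_univ_eq_sum_range fun v => ψ ((ω ^ i * (ω ^ d) ^ v : (ZMod p)ˣ) * B t)]
          simp only [h, g, Units.val_mul, Units.val_pow_eq_pow_val]
  rw [hexpand]
  refine sum_mem fun t _ => ?_
  rw [AddChar.sum_units_mulShift (AddChar.zmodChar_primitive_of_primitive_root p hζ)]
  split_ifs
  · exact sub_mem (natCast_mem _ _) (one_mem _)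
  · exact neg_mem (one_mem _)

theorem coeff_factorial_integer_general (p d f : ℕ) (hp : p.Prime)
    (hdvd : d ∣ p - 1) (hf : f = (p - 1) / d)
    (ω : (ZMod p)ˣ) (hω : ∀ x : (ZMod p)ˣ, ∃ n : ℕ, ω ^ n = x)
    (ζ : ℂ) (hζ : IsPrimitiveRoot ζ p)
    (j : ℕ)
    (c : ℕ → ℂ) (hc0 : c 0 = 1)
    (hc : ∀ k, 1 ≤ k →
      c k = -(1 / (k : ℂ)) * ∑ l ∈ Finset.range k, c l * nInt p d f ω ζ (k - 1 - l) j) :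
    ∀ k, (∃ z : ℤ, ((k.factorial : ℂ)) * c k = (z : ℂ)) ∧ (∃ q : ℚ, c k = (q : ℂ)) := by
  intro k
  obtain ⟨z, hz⟩ := Subring.mem_bot.mp <| factorial_mul_mem_bot_of_recurrence
    (fun m => nInt_mem_bot hp hdvd hf hω hζ m j) hc0 hc k
  refine ⟨⟨z, hz.symm⟩, z / k.factorial, ?_⟩
  have hk : (k.factorial : ℂ) ≠ 0 := Nat.cast_ne_zero.mpr k.factorial_ne_zero
  push_cast
  rw [hz, mul_div_cancel_left₀ _ hk]

/-- for the recursively defined coefficients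
`c₀ = 1`, `c_k = −(1/k)·Σ_{l=0}^{k-1} c_l·n(k−1−l,j)`, each `k!·c_k` is a rational
integer; in particular every `c_k` is rational. -/
theorem coeff_factorial_integer (p d f : ℕ) (hp : p.Prime) (hodd : Odd p)
    (hd : 2 ≤ d) (hdvd : d ∣ p - 1) (hf : f = (p - 1) / d)
    (ω : (ZMod p)ˣ) (hω : ∀ x : (ZMod p)ˣ, ∃ n : ℕ, ω ^ n = x)
    (ζ : ℂ) (hζ : IsPrimitiveRoot ζ p)
    (j : ℕ) (hj : j < d)
    (c : ℕ → ℂ) (hc0 : c 0 = 1)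
    (hc : ∀ k, 1 ≤ k →
      c k = -(1 / (k : ℂ)) * ∑ l ∈ Finset.range k, c l * nInt p d f ω ζ (k - 1 - l) j) :
    ∀ k, (∃ z : ℤ, ((k.factorial : ℂ)) * c k = (z : ℂ)) ∧ (∃ q : ℚ, c k = (q : ℂ)) :=
  coeff_factorial_integer_general p d f hp hdvd hf ω hω ζ hζ j c hc0 hc
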